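/- arXiv:2605.11100 — 2 statements merged into one kernel-verified Lean document; each statement's English description precedes it below -/
import Mathlib

section
/- Let u be a rational number with u² ≠ 0, 1, and E_u : y² = x(x+1)(x+u²). Then the points (u, u(u+1)), (u, -u(u+1)), (-u, u(u-1)), (-u, -u(u-1)) lie on E_u, each has order exactly 4, and doubling any of them gives the 2-torsion point (0,0). -/
/-!
On `y² = x³ + a₂x² + a₄x` the tangent line at a point `P = (a, b)` with `b ≠ 0` passes through the
origin exactly when `a² = a₄`; then the third intersection of the tangent with the curve is the
2-torsion point `T = (0, 0)`, which is its own negative, so `2P = T`, and `P` has order 4. On `E_u`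
we have `a₄ = u²`, and the four given points are the points `(a, ±a(a + 1))` with `a = ±u`.
-/

/-- The elliptic curve `E_u : y² = x(x+1)(x+u²)` over `ℚ`, as a Weierstrass curve. -/
def Eu (u : ℚ) : WeierstrassCurve ℚ :=
  { a₁ := 0, a₂ := 1 + u ^ 2, a₃ := 0, a₄ := u ^ 2, a₆ := 0 }

theorem addOrderOf_eq_four_of_two_nsmul {G : Type*} [AddMonoid G] {x t : G}
    (hx : 2 • x = t) (ht : t ≠ 0) (ht2 : 2 • t = 0) : addOrderOf x = 4 := by
  have h4 : 2 ^ 2 • x = 0 := by rw [pow_two, mul_nsmul, hx, ht2]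
  exact addOrderOf_eq_prime_pow (p := 2) (n := 1) (by rwa [pow_one, hx]) h4

namespace WeierstrassCurve.Affine.Point

variable {F : Type*} [Field F] [DecidableEq F] {W : Affine F}

theorem two_nsmul_some_eq_some_zero_zero (ha₁ : W.a₁ = 0) (ha₃ : W.a₃ = 0) {a b : F}
    (h : W.Nonsingular a b) (h₀ : W.Nonsingular 0 0) (hy : b ≠ W.negY a b) (ha : a ^ 2 = W.a₄) :
    2 • some _ _ h = some _ _ h₀ := by
  have hden : b - W.negY a b = 2 * b := by
    rw [negY, ha₁, ha₃]
    ring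
  have h2b : 2 * b ≠ 0 := hden ▸ sub_ne_zero.mpr hy
  have heq : b ^ 2 = a ^ 3 + W.a₂ * a ^ 2 + W.a₄ * a := by
    have := (equation_iff a b).mp h.1
    rw [ha₁, ha₃, (nonsingular_zero.mp h₀).1] at this
    linear_combination this
  have ha0 : a ≠ 0 := by
    rintro rfl
    have hb : b = 0 := (pow_eq_zero_iff two_ne_zero).mp (by linear_combination heq)
    exact h2b (by rw [hb, mul_zero])
  set ℓ := W.slope a a b b with hℓdef
  have hℓ : ℓ * (2 * b) = 3 * a ^ 2 + 2 * W.a₂ * a + W.a₄ := by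
    rw [hℓdef, slope_of_Y_ne rfl hy, hden, ha₁, zero_mul, sub_zero, div_mul_cancel₀ _ h2b]
  -- `a ^ 2 = a₄` says exactly that the tangent line at `(a, b)` passes through the origin
  have hℓa : ℓ * a = b := by
    refine mul_right_cancel₀ h2b ?_
    linear_combination a * hℓ - 2 * heq + a * ha
  have hℓ2 : ℓ ^ 2 = W.a₂ + 2 * a := by
    refine mul_right_cancel₀ (pow_ne_zero 2 ha0) ?_
    linear_combination (ℓ * a + b) * hℓa + heq - a * ha
  have hx : W.addX a a ℓ = 0 := by
    rw [addX, ha₁]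
    linear_combination hℓ2
  have hy' : W.addY a a b ℓ = 0 := by
    rw [addY, negAddY, hx, negY, ha₁, ha₃]
    linear_combination hℓa
  rw [two_nsmul, add_self_of_Y_ne hy, some.injEq]
  exact ⟨hx, hy'⟩

end WeierstrassCurve.Affine.Point

open WeierstrassCurve.Affine

/-- The points `(u, ±u(u+1))` and `(-u, ±u(u-1))` lie on `E_u`, have order exactly 4,
and doubling any of them gives the 2-torsion point `(0,0)`. -/
theorem order_four_points_of_Eu (u : ℚ) (hu0 : u ^ 2 ≠ 0) (hu1 : u ^ 2 ≠ 1)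
    (a b : ℚ)
    (hab : (a, b) = (u, u * (u + 1)) ∨ (a, b) = (u, -(u * (u + 1))) ∨
      (a, b) = (-u, u * (u - 1)) ∨ (a, b) = (-u, -(u * (u - 1)))) :
    ∃ (h : (Eu u).toAffine.Nonsingular a b) (h₀ : (Eu u).toAffine.Nonsingular 0 0),
      addOrderOf (WeierstrassCurve.Affine.Point.some _ _ h) = 4 ∧
        2 • WeierstrassCurve.Affine.Point.some _ _ h = WeierstrassCurve.Affine.Point.some _ _ h₀ := by
  obtain ⟨ha, hb⟩ : a ^ 2 = u ^ 2 ∧ b ^ 2 = (a * (a + 1)) ^ 2 := by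
    simp only [Prod.mk.injEq] at hab
    rcases hab with ⟨rfl, rfl⟩ | ⟨rfl, rfl⟩ | ⟨rfl, rfl⟩ | ⟨rfl, rfl⟩ <;> constructor <;> ring
  have hb0 : b ≠ 0 := by
    rintro rfl
    have : a * (a + 1) = 0 := (pow_eq_zero_iff two_ne_zero).mp (by linear_combination -hb)
    rcases mul_eq_zero.mp this with h | h
    · exact hu0 (by linear_combination -ha + a * h)
    · exact hu1 (by linear_combination -ha + (a - 1) * h)
  have hy : b ≠ (Eu u).toAffine.negY a b := by
    rw [negY]
    simp only [Eu]
    contrapose! hb0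
    linarith
  have h : (Eu u).toAffine.Nonsingular a b := by
    refine (nonsingular_iff a b).mpr ⟨(equation_iff a b).mpr ?_, Or.inr hy⟩
    simp only [Eu]
    linear_combination hb + (a ^ 2 + a) * ha
  have h₀ : (Eu u).toAffine.Nonsingular 0 0 := nonsingular_zero.mpr ⟨rfl, Or.inr hu0⟩
  have h2 := Point.two_nsmul_some_eq_some_zero_zero rfl rfl h h₀ hy ha
  refine ⟨h, h₀, addOrderOf_eq_four_of_two_nsmul h2 (Point.some_ne_zero h₀) ?_, h2⟩
  rw [two_nsmul]
  exact Point.add_self_of_Y_eq (by simp [negY, Eu])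
end

section
/- Let u ∈ ℚ with u ≠ 0, ±1, and consider the function h = (u(x+1)+y)/(x+u) on E_u : y² = x(x+1)(x+u²). Then the divisor of h is [(-1,0)] + [(u, -u²-u)] - [(-u, -u²+u)] - [O], i.e. h vanishes to order 1 at (-1,0) and (u, -u²-u), and has simple poles at (-u, -u²+u) and at the point at infinity O, and no other zeros or poles. -/
open Polynomial

/-!
The line `y = -u(x + 1)` through `(-1, 0)` and `(u, -u² - u)` has slope `-u` and meets `E_u` a
third time at `(-u, u² - u)`, so `y + u(x + 1)` generates the product of the three point ideals;
the vertical line `x = -u` meets `E_u` at `(-u, ±(u² - u))`. All these points are nonsingular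
because `Δ(E_u) = 16u⁴(u² - 1)²` does not vanish.
-/

open WeierstrassCurve.Affine WeierstrassCurve.Affine.CoordinateRing

namespace WeierstrassCurve.Affine.CoordinateRing

variable {F : Type*} [Field F] [DecidableEq F] {W : WeierstrassCurve.Affine F}

/-- `(addX, negAddY)` is the third point `-(P₁ + P₂)` where the line through `P₁`, `P₂` meets `W`. -/
lemma YIdeal_linePolynomial_slope {x₁ x₂ y₁ y₂ : F} (h₁ : W.Nonsingular x₁ y₁)
    (h₂ : W.Nonsingular x₂ y₂) (hxy : ¬(x₁ = x₂ ∧ y₁ = W.negY x₂ y₂)) :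
    YIdeal W (linePolynomial x₁ y₁ (W.slope x₁ x₂ y₁ y₂)) =
      XYIdeal W (W.addX x₁ x₂ (W.slope x₁ x₂ y₁ y₂))
          (C (W.negAddY x₁ x₂ y₁ (W.slope x₁ x₂ y₁ y₂))) *
        XYIdeal W x₁ (C y₁) * XYIdeal W x₂ (C y₂) := by
  set L := W.slope x₁ x₂ y₁ y₂
  set x₃ := W.addX x₁ x₂ L
  rw [← Ideal.span_singleton_mul_right_inj (XClass_ne_zero (W' := W) x₃)]
  calc XIdeal W x₃ * YIdeal W (linePolynomial x₁ y₁ L)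
      = YIdeal W (linePolynomial x₁ y₁ L) * XYIdeal W x₃ (C (W.addY x₁ x₂ y₁ L)) *
          XYIdeal W x₃ (C (W.negAddY x₁ x₂ y₁ L)) := by
        rw [mul_assoc, mul_comm]
        exact congrArg (_ * ·) (XYIdeal_neg_mul (nonsingular_negAdd h₁ h₂ hxy)).symm
    _ = XIdeal W x₃ * (XYIdeal W x₃ (C (W.negAddY x₁ x₂ y₁ L)) *
          XYIdeal W x₁ (C y₁) * XYIdeal W x₂ (C y₂)) := by
        rw [← XYIdeal_mul_XYIdeal h₁.left h₂.left hxy]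
        ring

end WeierstrassCurve.Affine.CoordinateRing

lemma Eu_Δ (u : ℚ) : (Eu u).Δ = 16 * u ^ 4 * (u ^ 2 - 1) ^ 2 := by
  simp only [WeierstrassCurve.Δ, WeierstrassCurve.b₂, WeierstrassCurve.b₄, WeierstrassCurve.b₆,
    WeierstrassCurve.b₈, Eu]
  ring

lemma Eu_Δ_ne_zero {u : ℚ} (hu0 : u ≠ 0) (hu1 : u ≠ 1) (hum1 : u ≠ -1) : (Eu u).Δ ≠ 0 := by
  have : u ^ 2 - 1 ≠ 0 := sub_ne_zero.mpr (sq_ne_one_iff.mpr ⟨hu1, hum1⟩)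
  rw [Eu_Δ]
  positivity

lemma Eu_nonsingular {u x y : ℚ} (hu0 : u ≠ 0) (hu1 : u ≠ 1) (hum1 : u ≠ -1)
    (h : y ^ 2 = x * (x + 1) * (x + u ^ 2)) : (Eu u).toAffine.Nonsingular x y := by
  rw [← equation_iff_nonsingular_of_Δ_ne_zero (Eu_Δ_ne_zero hu0 hu1 hum1), equation_iff]
  simp only [Eu]
  linear_combination h

lemma Eu_slope {u : ℚ} (hum1 : u ≠ -1) : (Eu u).toAffine.slope (-1) u 0 (-u ^ 2 - u) = -u := by
  have hx : (-1 : ℚ) - u ≠ 0 := fun h => hum1 (by linarith)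
  rw [slope_of_X_ne (sub_ne_zero.mp hx), div_eq_iff hx]
  ring

lemma Eu_span_numerator {u : ℚ} (hu0 : u ≠ 0) (hu1 : u ≠ 1) (hum1 : u ≠ -1) :
    Ideal.span {mk (Eu u).toAffine (X + C (C u * (X + 1)))} =
      XYIdeal (Eu u).toAffine (-u) (C (u ^ 2 - u)) * XYIdeal (Eu u).toAffine (-1) 0 *
        XYIdeal (Eu u).toAffine u (C (-u ^ 2 - u)) := by
  have hP₁ : (Eu u).toAffine.Nonsingular (-1) 0 := Eu_nonsingular hu0 hu1 hum1 (by ring)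
  have hP₂ : (Eu u).toAffine.Nonsingular u (-u ^ 2 - u) := Eu_nonsingular hu0 hu1 hum1 (by ring)
  have hline := YIdeal_linePolynomial_slope hP₁ hP₂ (fun h => hum1 h.1.symm)
  rw [Eu_slope hum1] at hline
  have haddX : (Eu u).toAffine.addX (-1) u (-u) = -u := by
    simp only [addX, Eu]; ring
  have hnegAddY : (Eu u).toAffine.negAddY (-1) u 0 (-u) = u ^ 2 - u := by
    rw [negAddY, haddX]; ring
  rw [haddX, hnegAddY, C_0] at hline
  rw [← hline, YIdeal, YClass, linePolynomial]
  congr 3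
  simp only [map_add, map_sub, map_mul, map_neg, map_one, map_zero]
  ring

lemma Eu_span_denominator {u : ℚ} (hu0 : u ≠ 0) (hu1 : u ≠ 1) (hum1 : u ≠ -1) :
    Ideal.span {mk (Eu u).toAffine (C (X + C u))} =
      XYIdeal (Eu u).toAffine (-u) (C (-u ^ 2 + u)) *
        XYIdeal (Eu u).toAffine (-u) (C (u ^ 2 - u)) := by
  have hP : (Eu u).toAffine.Nonsingular (-u) (u ^ 2 - u) := Eu_nonsingular hu0 hu1 hum1 (by ring)
  have hnegY : (Eu u).toAffine.negY (-u) (u ^ 2 - u) = -u ^ 2 + u := by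
    simp only [negY, Eu]; ring
  rw [← hnegY, XYIdeal_neg_mul hP, XIdeal, XClass, map_neg, sub_neg_eq_add]

open WeierstrassCurve.Affine WeierstrassCurve.Affine.CoordinateRing Ideal in
/-- The divisor of `h` is encoded by the factorisations of the principal ideals of its numerator
`y + u(x+1)` and denominator `x + u` into maximal ideals of points of the affine coordinate ring;
the simple pole at `O` is then forced, as principal divisors have degree zero. -/
theorem divisor_of_h (u : ℚ) (hu0 : u ≠ 0) (hu1 : u ≠ 1) (hum1 : u ≠ -1) :
    (Eu u).toAffine.Nonsingular (-1) 0 ∧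
      (Eu u).toAffine.Nonsingular u (-u ^ 2 - u) ∧
        (Eu u).toAffine.Nonsingular (-u) (-u ^ 2 + u) ∧
          (Eu u).toAffine.Nonsingular (-u) (u ^ 2 - u) ∧
            List.Pairwise (· ≠ ·)
              [((-1 : ℚ), (0 : ℚ)), (u, -u ^ 2 - u), (-u, -u ^ 2 + u), (-u, u ^ 2 - u)] ∧
        Ideal.span {WeierstrassCurve.Affine.CoordinateRing.mk (Eu u).toAffine
            (Polynomial.X + Polynomial.C (Polynomial.C u * (Polynomial.X + 1)))} =
          WeierstrassCurve.Affine.CoordinateRing.XYIdeal (Eu u).toAffine (-u)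
              (Polynomial.C (u ^ 2 - u)) *
            WeierstrassCurve.Affine.CoordinateRing.XYIdeal (Eu u).toAffine (-1) 0 *
              WeierstrassCurve.Affine.CoordinateRing.XYIdeal (Eu u).toAffine u
                (Polynomial.C (-u ^ 2 - u)) ∧
          Ideal.span {WeierstrassCurve.Affine.CoordinateRing.mk (Eu u).toAffine
              (Polynomial.C (Polynomial.X + Polynomial.C u))} =
            WeierstrassCurve.Affine.CoordinateRing.XYIdeal (Eu u).toAffine (-u)
                (Polynomial.C (-u ^ 2 + u)) *
              WeierstrassCurve.Affine.CoordinateRing.XYIdeal (Eu u).toAffine (-u)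
                (Polynomial.C (u ^ 2 - u)) := by
  refine ⟨Eu_nonsingular hu0 hu1 hum1 (by ring), Eu_nonsingular hu0 hu1 hum1 (by ring),
    Eu_nonsingular hu0 hu1 hum1 (by ring), Eu_nonsingular hu0 hu1 hum1 (by ring), ?_,
    Eu_span_numerator hu0 hu1 hum1, Eu_span_denominator hu0 hu1 hum1⟩
  have hu : u * (u - 1) ≠ 0 := mul_ne_zero hu0 (sub_ne_zero.mpr hu1)
  simp only [List.pairwise_cons, List.mem_cons, List.not_mem_nil, ne_eq]
  grind
end
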